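/- arXiv:2410.15565 — 4 statements merged into one kernel-verified Lean document; each statement's English description precedes it below -/
import Mathlib

section
/- For real γ with 1 ≤ γ ≤ 13/12, set α = β = √(1 − 3γ/4), n = (4/3)^(d/2), C(α) = (1−α²)^(d/2) = (3γ/4)^(d/2), and t = (1 − (4/3)α²)^(−d/2) = (3/(3γ−1))^(d/2). Then n·t·C(α) = n²·t·C(α)²/γ^(d/2) = (3γ/(3γ−1))^(d/2), and moreover γ^d ≤ n·t·C(α)² holds if and only if γ ≤ 13/12. -/
/-!
With `α² = 1 - 3γ/4`, every quantity is a `d/2`-th power of an explicit positive rational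
function of `γ`: `C(α) = (3γ/4)^(d/2)` and `t = ((3γ - 1)/3)^(-d/2)`. Since `x ↦ x^(d/2)` is
multiplicative and strictly monotone on `[0, ∞)`, the identities reduce to identities between
the bases, and the QRAM constraint `γ^d ≤ n·t·C(α)²` to `γ² ≤ 9γ²/(4(3γ - 1))`, that is,
to `4(3γ - 1) ≤ 9`.
-/

open Real

lemma Real.sq_rpow_half {x : ℝ} (hx : 0 ≤ x) (d : ℝ) : (x ^ 2) ^ (d / 2) = x ^ d := by
  rw [← rpow_natCast, ← rpow_mul hx]
  ring_nf

lemma sq_le_qram_base_iff {γ : ℝ} (hγ : 1 / 3 < γ) :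
    γ ^ 2 ≤ 4 / 3 * (3 / (3 * γ - 1)) * (3 * γ / 4) ^ 2 ↔ γ ≤ 13 / 12 := by
  have hγ3 : 0 < 3 * γ - 1 := by linarith
  rw [show 4 / 3 * (3 / (3 * γ - 1)) * (3 * γ / 4) ^ 2 = 9 * γ ^ 2 / (4 * (3 * γ - 1)) by
    field_simp; ring, le_div_iff₀ (by positivity)]
  have hγ2 : 0 < γ ^ 2 := by positivity
  constructor <;> intro h <;> nlinarith

/-- Optimization of the QRAM-bounded quantum LSF sieve: with
α = β = √(1 − 3γ/4), the terms n·t·C(α) and n²·t·C(α)²/γ^(d/2) both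
equal (3γ/(3γ−1))^(d/2); also C(α) = (3γ/4)^(d/2), t = (3/(3γ−1))^(d/2),
and the QRAM constraint γ^d ≤ n·t·C(α)² holds iff γ ≤ 13/12. -/
theorem qram_bounded_lsf_optimization (d γ : ℝ) (hd : 0 < d)
    (hγ : 1 ≤ γ) (hγ' : γ ≤ 4/3) :
    let α : ℝ := Real.sqrt (1 - 3*γ/4)
    let n : ℝ := (4/3) ^ (d/2)
    let C : ℝ → ℝ := fun x => (1 - x^2) ^ (d/2)
    let t : ℝ := (1 - (4/3)*α^2) ^ (-(d/2))
    C α = (3*γ/4) ^ (d/2) ∧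
    t = (3/(3*γ-1)) ^ (d/2) ∧
    n * t * C α = (3*γ/(3*γ-1)) ^ (d/2) ∧
    n^2 * t * (C α)^2 / γ ^ (d/2) = (3*γ/(3*γ-1)) ^ (d/2) ∧
    (γ ^ d ≤ n * t * (C α)^2 ↔ γ ≤ 13/12) := by
  intro α n C t
  have hα2 : α ^ 2 = 1 - 3 * γ / 4 := sq_sqrt (by linarith)
  have hγ0 : 0 ≤ γ := by linarith
  have hγ3 : 0 ≤ 3 / (3 * γ - 1) := div_nonneg (by norm_num) (by linarith)
  have hC : C α = (3 * γ / 4) ^ (d / 2) := by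
    simp only [C, hα2]
    ring_nf
  have ht : t = (3 / (3 * γ - 1)) ^ (d / 2) := by
    simp only [t, hα2, rpow_neg_eq_inv_rpow]
    congr 1
    field_simp
    ring
  have hC2 : C α ^ 2 = ((3 * γ / 4) ^ 2) ^ (d / 2) := by rw [hC, rpow_pow_comm (by positivity)]
  refine ⟨hC, ht, ?_, ?_, ?_⟩
  · rw [hC, ht, ← mul_rpow (by norm_num) hγ3, ← mul_rpow (by positivity) (by positivity)]
    congr 1
    field_simp
  · rw [rpow_pow_comm (by norm_num), ht, hC2, ← mul_rpow (by norm_num) hγ3,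
      ← mul_rpow (by positivity) (by positivity), ← div_rpow (by positivity) hγ0]
    congr 1
    field_simp
  · rw [← sq_rpow_half hγ0, hC2, ht, ← mul_rpow (by norm_num) hγ3,
      ← mul_rpow (by positivity) (by positivity),
      rpow_le_rpow_iff (by positivity) (by positivity) (by positivity)]
    exact sq_le_qram_base_iff (by linarith)
end

section
/- The polynomial equation 32(2α⁴ − α³ − 3α² + α) + 5 = 0 has a unique root α in the open interval (0.44, 0.45), and for this α with β = 1/2 the quantity t·C(β)² = C(α) holds where C(x) = (1−x²)^{d/2} and t = (1 − (4/3)(α² − αβ + β²))^{−d/2}, i.e., (1−α²)·(1 − (4/3)(α² − α/2 + 1/4)) = (1 − 1/4)² = 9/16 — equivalently, the exponent-level identity (1−β²)² = (1−α²)·(1 − (4/3)(α² − αβ + β²)) with β = 1/2 is equivalent to 32(2α⁴ − α³ − 3α² + α) + 5 = 0. -/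
open Set

theorem existsUnique_mem_Ioo_eq_zero_of_strictAntiOn {f : ℝ → ℝ} {a b : ℝ} (hab : a ≤ b)
    (hf : ContinuousOn f (Icc a b)) (hf_anti : StrictAntiOn f (Icc a b))
    (ha : 0 < f a) (hb : f b < 0) : ∃! x, x ∈ Ioo a b ∧ f x = 0 := by
  obtain ⟨x, hx, hfx⟩ := intermediate_value_Ioo' hab hf ⟨hb, ha⟩
  refine ⟨x, ⟨hx, hfx⟩, fun y ⟨hy, hfy⟩ => ?_⟩
  exact hf_anti.injOn (Ioo_subset_Icc_self hy) (Ioo_subset_Icc_self hx) (hfy.trans hfx.symm)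

def heiserQuartic (α : ℝ) : ℝ := 32 * (2 * α ^ 4 - α ^ 3 - 3 * α ^ 2 + α) + 5

theorem continuous_heiserQuartic : Continuous heiserQuartic := by
  unfold heiserQuartic
  fun_prop

theorem heiserQuartic_strictAntiOn : StrictAntiOn heiserQuartic (Icc 0.44 0.45) := by
  rintro a ⟨ha₀, ha₁⟩ b ⟨hb₀, hb₁⟩ hab
  set q := 64 * (a ^ 3 + a ^ 2 * b + a * b ^ 2 + b ^ 3) - 32 * (a ^ 2 + a * b + b ^ 2)
    - 96 * (a + b) + 32
  have h_factor : heiserQuartic b - heiserQuartic a = (b - a) * q := by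
    unfold heiserQuartic; ring
  -- the cubic part of `q` is at most `256 · 0.45³ < 24`, while `96 (a + b) - 32 > 52`
  have hq : q < 0 := by
    nlinarith [mul_le_mul ha₁ hb₁ (by linarith) (by norm_num : (0 : ℝ) ≤ 0.45),
      mul_le_mul ha₁ ha₁ (by linarith) (by norm_num : (0 : ℝ) ≤ 0.45),
      mul_le_mul hb₁ hb₁ (by linarith) (by norm_num : (0 : ℝ) ≤ 0.45),
      mul_pos (by linarith : (0 : ℝ) < a) (by linarith : (0 : ℝ) < b)]
  nlinarith [mul_neg_of_pos_of_neg (sub_pos.mpr hab) hq]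

theorem heiserQuartic_eq_mul_sub (α : ℝ) :
    heiserQuartic α = 48 * ((1 - α ^ 2) * (1 - (4 / 3) * (α ^ 2 - α * (1 / 2) + (1 / 2) ^ 2))
      - (1 - (1 / 2) ^ 2) ^ 2) := by
  unfold heiserQuartic; ring

/-- The quartic 32(2α⁴ − α³ − 3α² + α) + 5 = 0 has a unique root in
(0.44, 0.45), and for β = 1/2 the exponent-level identity
(1−β²)² = (1−α²)·(1 − (4/3)(α² − αβ + β²)) is equivalent to this quartic. -/
theorem heiser_optimization_quartic :
    (∃! α : ℝ, α ∈ Set.Ioo (0.44:ℝ) 0.45 ∧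
      32*(2*α^4 - α^3 - 3*α^2 + α) + 5 = 0) ∧
    (∀ α : ℝ,
      (1 - ((1:ℝ)/2)^2)^2
        = (1 - α^2) * (1 - (4/3)*(α^2 - α*(1/2) + ((1:ℝ)/2)^2))
      ↔ 32*(2*α^4 - α^3 - 3*α^2 + α) + 5 = 0) := by
  refine ⟨existsUnique_mem_Ioo_eq_zero_of_strictAntiOn (by norm_num)
    continuous_heiserQuartic.continuousOn heiserQuartic_strictAntiOn
    (by norm_num [heiserQuartic]) (by norm_num [heiserQuartic]), fun α => ?_⟩
  change _ ↔ heiserQuartic α = 0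
  rw [heiserQuartic_eq_mul_sub, mul_eq_zero, sub_eq_zero, eq_comm]
  norm_num
end

section
/- For 1 ≤ γ ≤ 4/3, let α = √(1 − (3/4)γ) and β = 1/2, n = (4/3)^{d/2}, C(x) = (1−x²)^{d/2}, and t = (1 − (4/3)(α² − αβ + β²))^{−d/2}; then the identity n²·t·C(α)·C(β)/γ^{d/2} = n·t·C(β) holds, and the common value equals (γ − 2/3 + (2/3)√(1 − (3/4)γ))^{−d/2}. -/
/-- QRAM-limited Heiser sieve optimization: with α = √(1 − 3γ/4) and
β = 1/2, the identity n²·t·C(α)·C(β)/γ^(d/2) = n·t·C(β) holds, and the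
common value equals (γ − 2/3 + (2/3)√(1 − 3γ/4))^(−d/2). -/
theorem heiser_qram_optimization (d γ : ℝ) (hγ : 1 ≤ γ) (hγ' : γ ≤ 4/3) :
    let α : ℝ := Real.sqrt (1 - (3/4)*γ)
    let β : ℝ := 1/2
    let n : ℝ := (4/3) ^ (d/2)
    let C : ℝ → ℝ := fun x => (1 - x^2) ^ (d/2)
    let t : ℝ := (1 - (4/3)*(α^2 - α*β + β^2)) ^ (-(d/2))
    n^2 * t * C α * C β / γ ^ (d/2) = n * t * C β ∧
    n * t * C β = (γ - 2/3 + (2/3)*Real.sqrt (1 - (3/4)*γ)) ^ (-(d/2)) := by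
  intro α β n C t
  have hγ0 : (0:ℝ) < γ := by linarith
  have hs0 : (0:ℝ) ≤ 1 - (3/4)*γ := by linarith
  have hα2 : α^2 = 1 - (3/4)*γ := Real.sq_sqrt hs0
  have hα0 : 0 ≤ α := Real.sqrt_nonneg _
  have hCα : C α = ((3/4)*γ)^(d/2) := by
    simp only [C]
    congr 1
    rw [hα2]; ring
  have hCβ : C β = (3/4:ℝ)^(d/2) := by
    simp only [C, β]
    norm_num
  have ht : t = (γ - 2/3 + (2/3)*α)^(-(d/2)) := by
    simp only [t, β]
    congr 1
    rw [hα2]; ring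
  have hnβ : n * C β = 1 := by
    rw [hCβ]
    simp only [n]
    rw [← Real.mul_rpow (by norm_num) (by norm_num)]
    norm_num
  have key : n^2 * C α * C β / γ^(d/2) = 1 := by
    rw [hCα, hCβ]
    have hn : n^2 = ((4/3:ℝ)*(4/3))^(d/2) := by
      simp only [n, sq]
      rw [← Real.mul_rpow (by norm_num) (by norm_num)]
    rw [hn, ← Real.mul_rpow (by norm_num) (by positivity),
        ← Real.mul_rpow (by positivity) (by norm_num),
        ← Real.div_rpow (by positivity) hγ0.le]
    have : (4/3:ℝ)*(4/3)*((3/4)*γ)*(3/4)/γ = 1 := by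
      field_simp
    rw [this, Real.one_rpow]
  constructor
  · calc n^2 * t * C α * C β / γ^(d/2)
        = t * (n^2 * C α * C β / γ^(d/2)) := by ring
      _ = n * t * C β := by rw [key, mul_one]; rw [show n * t * C β = t * (n * C β) from by ring, hnβ, mul_one]
  · calc n * t * C β = t * (n * C β) := by ring
      _ = t := by rw [hnβ, mul_one]
      _ = _ := ht
end

section
/- For all γ ∈ [1, 13/12], the inequality γ − 2/3 + (2/3)·√(1 − (3/4)γ) ≥ (3γ−1)/(3γ) holds, with equality only at γ = 1; equivalently, the Heiser-based trade-off T₅ = (γ − 2/3 + (2/3)√(1 − 3γ/4))^{−d/2} is at most the query-wise trade-off T₂ = (3γ/(3γ−1))^{d/2} for the same QRAM budget γ^d. -/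
/-!
Multiplying by `3γ`, the claim is `2γ√(1 - 3γ/4) ≥ 5γ - 1 - 3γ²`. Both sides are positive on
`[1, 13/12]`, and the difference of their squares factors as `(γ - 1)(1 - 9γ(γ - 1)²)`, whose second
factor stays positive there. Hence the gap between the two bases has the sign of `γ - 1`, and
vanishes only at `γ = 1`. The running-time comparison follows since `x ↦ x ^ (-(d/2))` is antitone.
-/

open Real

lemma heiser_sub_querywise_eq_div {γ s : ℝ} (hγ : γ ≠ 0) (hs : s ^ 2 = 1 - 3 / 4 * γ)
    (hden : 2 * γ * s + (5 * γ - 1 - 3 * γ ^ 2) ≠ 0) :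
    γ - 2 / 3 + 2 / 3 * s - (3 * γ - 1) / (3 * γ)
      = (γ - 1) * (1 - 9 * γ * (γ - 1) ^ 2) / (3 * γ * (2 * γ * s + (5 * γ - 1 - 3 * γ ^ 2))) := by
  rw [eq_div_iff (mul_ne_zero (mul_ne_zero three_ne_zero hγ) hden)]
  field_simp
  linear_combination (4 * γ ^ 2) * hs

lemma one_sub_nine_mul_sq_pos {γ : ℝ} (h1 : 1 ≤ γ) (h2 : γ ≤ 13 / 12) :
    0 < 1 - 9 * γ * (γ - 1) ^ 2 := by
  nlinarith [mul_le_mul h2 (pow_le_pow_left₀ (sub_nonneg.2 h1) (show γ - 1 ≤ 1 / 12 by linarith) 2)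
    (sq_nonneg _) (by norm_num)]

lemma rpow_neg_le_inv_rpow {a b t : ℝ} (ha : 0 < a) (hab : a ≤ b) (ht : 0 ≤ t) :
    b ^ (-t) ≤ a⁻¹ ^ t := by
  rw [inv_rpow ha.le, ← rpow_neg ha.le]
  exact rpow_le_rpow_of_nonpos ha hab (neg_nonpos.2 ht)

/-- For γ ∈ [1, 13/12], γ − 2/3 + (2/3)√(1 − 3γ/4) ≥ (3γ−1)/(3γ), with
equality only at γ = 1; equivalently the Heiser trade-off
T₅ = f(γ)^(−d/2) is at most the query-wise trade-off T₂ = (3γ/(3γ−1))^(d/2). -/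
theorem heiser_beats_querywise :
    ∀ γ ∈ Set.Icc (1:ℝ) (13/12),
      ((3*γ-1)/(3*γ) ≤ γ - 2/3 + (2/3)*Real.sqrt (1 - (3/4)*γ)) ∧
      (γ - 2/3 + (2/3)*Real.sqrt (1 - (3/4)*γ) = (3*γ-1)/(3*γ) → γ = 1) ∧
      ∀ d : ℝ, 0 ≤ d →
        (γ - 2/3 + (2/3)*Real.sqrt (1 - (3/4)*γ)) ^ (-(d/2))
          ≤ (3*γ/(3*γ-1)) ^ (d/2) := by
  rintro γ ⟨h1, h2⟩
  have hp : 0 < 5 * γ - 1 - 3 * γ ^ 2 := by nlinarith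
  have hsum : 0 < 2 * γ * √(1 - 3 / 4 * γ) + (5 * γ - 1 - 3 * γ ^ 2) := by positivity
  have hden : 0 < 3 * γ * (2 * γ * √(1 - 3 / 4 * γ) + (5 * γ - 1 - 3 * γ ^ 2)) := by positivity
  have hgap := heiser_sub_querywise_eq_div (by positivity) (sq_sqrt (by linarith)) hsum.ne'
  have hq := one_sub_nine_mul_sq_pos h1 h2
  have hle : (3 * γ - 1) / (3 * γ) ≤ γ - 2 / 3 + 2 / 3 * √(1 - 3 / 4 * γ) := by
    rw [← sub_nonneg, hgap]
    exact div_nonneg (mul_nonneg (sub_nonneg.2 h1) hq.le) hden.le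
  refine ⟨hle, fun heq => ?_, fun d hd => ?_⟩
  · rw [← sub_eq_zero, hgap, div_eq_zero_iff, mul_eq_zero, sub_eq_zero] at heq
    rcases heq with (h | h) | h
    · exact h
    · exact absurd h hq.ne'
    · exact absurd h hden.ne'
  · have hq0 : 0 < (3 * γ - 1) / (3 * γ) := div_pos (by linarith) (by linarith)
    simpa only [inv_div] using rpow_neg_le_inv_rpow hq0 hle (by positivity : 0 ≤ d / 2)
end
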